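/- Let ε > 0 and let (α^k,β^k)_{k≥0} be an ε-thresholded best-response trajectory. Then (α^k,β^k) ∈ 𝒩_ε for every k ∈ ℕ with k ≥ 3 + 2·Ψ(α^0,β^0)/ε; that is, the thresholded best-response dynamics reaches (and stays in) the set of ε-Nash equilibria within a number of iterations bounded explicitly in terms of the initial potential and ε. -/

import Mathlib

/-!
`Ψ` is an exact potential of the game: it equals the sender's cost and differs from the
receiver's cost by `ρ ζ(α)`, which does not depend on `β`. A thresholded move therefore either
leaves the state unchanged, when the mover is already `ε`-optimal, or lowers `Ψ` by more than `ε`.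
At a state that is not an `ε`-Nash equilibrium some player is not `ε`-optimal, and that player
moves within the next two steps; so while no `ε`-Nash state is met, `Ψ(α^{2j}, β^{2j})` drops by
more than `ε` per `j`. As `Ψ ≥ 0` (`ζ` is a mutual information), some state with index
`2j ≤ 2 Ψ(α⁰, β⁰) / ε` is an `ε`-Nash equilibrium, and such a state is never left.
-/

open Finset

noncomputable section

variable {X W Y : Type*} [Fintype X] [Fintype W] [Fintype Y]

/-- The set `A` of sender policies: conditional distributions of `Y` given `(Z, W)`. -/
def senderSet (X W Y : Type*) [Fintype X] [Fintype W] [Fintype Y] :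
    Set (Y × X × W → ℝ) :=
  {α | (∀ t, 0 ≤ α t ∧ α t ≤ 1) ∧ ∀ z w, ∑ y, α (y, z, w) = 1}

/-- The set `B` of receiver policies: conditional distributions of `X̂` given `Y`. -/
def receiverSet (X Y : Type*) [Fintype X] [Fintype Y] : Set (X × Y → ℝ) :=
  {β | (∀ t, 0 ≤ β t ∧ β t ≤ 1) ∧ ∀ y, ∑ x, β (x, y) = 1}

/-- Expected distortion `ξ(α, β) = E{d(X, X̂)}`. -/
def xi (d : X × X → ℝ) (p : X × X × W → ℝ) (α : Y × X × W → ℝ) (β : X × Y → ℝ) : ℝ :=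
  ∑ x, ∑ x', ∑ y, ∑ z, ∑ w, d (x, x') * β (x', y) * α (y, z, w) * p (x, z, w)

/-- Joint distribution `P_α(y, w)` of `(Y, W)` induced by the sender policy `α`. -/
def Pyw (p : X × X × W → ℝ) (α : Y × X × W → ℝ) (y : Y) (w : W) : ℝ :=
  ∑ z, ∑ x, α (y, z, w) * p (x, z, w)

/-- Marginal distribution `P_α(y)` of `Y` induced by the sender policy `α`. -/
def Py (p : X × X × W → ℝ) (α : Y × X × W → ℝ) (y : Y) : ℝ :=
  ∑ w, Pyw p α y w

/-- Marginal distribution `q(w)` of the private information `W`. -/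
def qW (p : X × X × W → ℝ) (w : W) : ℝ := ∑ z, ∑ x, p (x, z, w)

/-- Mutual information `ζ(α) = I(Y; W)`.  Summands with `P_α(y, w) = 0` automatically
vanish since they are multiplied by `P_α(y, w) = 0`. -/
def zeta (p : X × X × W → ℝ) (α : Y × X × W → ℝ) : ℝ :=
  ∑ y, ∑ w, Pyw p α y w * Real.log (Pyw p α y w / (Py p α y * qW p w))

/-- Sender cost `U(α, β) = ξ(α, β) + ρ ζ(α)`. -/
def Ucost (d : X × X → ℝ) (p : X × X × W → ℝ) (ρ : ℝ)
    (α : Y × X × W → ℝ) (β : X × Y → ℝ) : ℝ :=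
  xi d p α β + ρ * zeta p α

/-- Receiver cost `V(α, β) = ξ(α, β)`. -/
def Vcost (d : X × X → ℝ) (p : X × X × W → ℝ)
    (α : Y × X × W → ℝ) (β : X × Y → ℝ) : ℝ :=
  xi d p α β

/-- Potential function `Ψ(α, β) = ξ(α, β) + ρ ζ(α)`. -/
def Psi (d : X × X → ℝ) (p : X × X × W → ℝ) (ρ : ℝ)
    (α : Y × X × W → ℝ) (β : X × Y → ℝ) : ℝ :=
  xi d p α β + ρ * zeta p α

/-- `(α, β)` is a Nash equilibrium of the privacy game. -/
def IsNash (d : X × X → ℝ) (p : X × X × W → ℝ) (ρ : ℝ)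
    (α : Y × X × W → ℝ) (β : X × Y → ℝ) : Prop :=
  α ∈ senderSet X W Y ∧ β ∈ receiverSet X Y ∧
    (∀ α' ∈ senderSet X W Y, Ucost d p ρ α β ≤ Ucost d p ρ α' β) ∧
    (∀ β' ∈ receiverSet X Y, Vcost d p α β ≤ Vcost d p α β')

/-- `(α, β)` is an `ε`-Nash equilibrium of the privacy game. -/
def IsEpsNash (d : X × X → ℝ) (p : X × X × W → ℝ) (ρ ε : ℝ)
    (α : Y × X × W → ℝ) (β : X × Y → ℝ) : Prop :=
  α ∈ senderSet X W Y ∧ β ∈ receiverSet X Y ∧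
    (∀ α' ∈ senderSet X W Y, Ucost d p ρ α β ≤ Ucost d p ρ α' β + ε) ∧
    (∀ β' ∈ receiverSet X Y, Vcost d p α β ≤ Vcost d p α β' + ε)

/-- An `ε`-thresholded best-response trajectory (Algorithm 2): at odd steps the
receiver switches to a best response only if it improves her cost by more than `ε`;
at even steps `k ≥ 2` the sender does likewise. -/
def IsThreshBRTraj (d : X × X → ℝ) (p : X × X × W → ℝ) (ρ ε : ℝ)
    (αs : ℕ → Y × X × W → ℝ) (βs : ℕ → X × Y → ℝ) : Prop :=
  αs 0 ∈ senderSet X W Y ∧ βs 0 ∈ receiverSet X Y ∧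
    (∀ k, 1 ≤ k → Odd k →
      αs k = αs (k - 1) ∧
      ∃ β' ∈ receiverSet X Y,
        (∀ β ∈ receiverSet X Y,
          Vcost d p (αs (k - 1)) β' ≤ Vcost d p (αs (k - 1)) β) ∧
        (ε < Vcost d p (αs (k - 1)) (βs (k - 1)) - Vcost d p (αs (k - 1)) β' →
          βs k = β') ∧
        (¬ (ε < Vcost d p (αs (k - 1)) (βs (k - 1)) - Vcost d p (αs (k - 1)) β') →
          βs k = βs (k - 1))) ∧
    (∀ k, 2 ≤ k → Even k →
      βs k = βs (k - 1) ∧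
      ∃ α' ∈ senderSet X W Y,
        (∀ α ∈ senderSet X W Y,
          Ucost d p ρ α' (βs (k - 1)) ≤ Ucost d p ρ α (βs (k - 1))) ∧
        (ε < Ucost d p ρ (αs (k - 1)) (βs (k - 1)) - Ucost d p ρ α' (βs (k - 1)) →
          αs k = α') ∧
        (¬ (ε < Ucost d p ρ (αs (k - 1)) (βs (k - 1)) - Ucost d p ρ α' (βs (k - 1))) →
          αs k = αs (k - 1)))

theorem sub_le_mul_log_div {a b : ℝ} (ha : 0 ≤ a) (hb : 0 ≤ b) (hab : b = 0 → a = 0) :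
    a - b ≤ a * Real.log (a / b) := by
  rcases ha.eq_or_lt with rfl | ha
  · simpa using hb
  have hb : 0 < b := hb.lt_of_ne fun h => ha.ne' (hab h.symm)
  have hlog := Real.one_sub_inv_le_log_of_pos (div_pos ha hb)
  calc a - b = a * (1 - (a / b)⁻¹) := by field_simp
    _ ≤ a * Real.log (a / b) := by gcongr

def IsEpsMinOn {σ : Type*} (c : σ → ℝ) (S : Set σ) (ε : ℝ) (a : σ) : Prop :=
  ∀ x ∈ S, c a ≤ c x + ε

def IsThreshUpdate {σ : Type*} (S : Set σ) (c : σ → ℝ) (ε : ℝ) (a a' : σ) : Prop :=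
  ∃ b ∈ S, (∀ x ∈ S, c b ≤ c x) ∧ (ε < c a - c b → a' = b) ∧ (¬ ε < c a - c b → a' = a)

namespace IsThreshUpdate

variable {σ : Type*} {S : Set σ} {c : σ → ℝ} {ε : ℝ} {a a' : σ}

theorem mem (h : IsThreshUpdate S c ε a a') (ha : a ∈ S) : a' ∈ S := by
  obtain ⟨b, hb, -, hswitch, hstay⟩ := h
  by_cases hc : ε < c a - c b
  · rwa [hswitch hc]
  · rwa [hstay hc]

theorem le (h : IsThreshUpdate S c ε a a') (ha : a ∈ S) : c a' ≤ c a := by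
  obtain ⟨b, -, hmin, hswitch, hstay⟩ := h
  by_cases hc : ε < c a - c b
  · rw [hswitch hc]; exact hmin a ha
  · rw [hstay hc]

theorem eq_of_isEpsMinOn (h : IsThreshUpdate S c ε a a') (hopt : IsEpsMinOn c S ε a) :
    a' = a := by
  obtain ⟨b, hb, -, -, hstay⟩ := h
  exact hstay (by linarith [hopt b hb])

theorem add_lt_of_not_isEpsMinOn (h : IsThreshUpdate S c ε a a')
    (hopt : ¬ IsEpsMinOn c S ε a) : c a' + ε < c a := by
  obtain ⟨b, -, hmin, hswitch, -⟩ := h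
  obtain ⟨x, hx, hlt⟩ : ∃ x ∈ S, c x + ε < c a := by simpa [IsEpsMinOn] using hopt
  have hc : ε < c a - c b := by linarith [hmin x hx]
  rw [hswitch hc]
  linarith

end IsThreshUpdate

theorem add_mul_le_of_forall_lt_not {u : ℕ → ℝ} {P : ℕ → Prop} {ε : ℝ}
    (hdesc : ∀ j, ¬ P j → u (j + 1) + ε ≤ u j) :
    ∀ n : ℕ, (∀ j < n, ¬ P j) → u n + n * ε ≤ u 0
  | 0, _ => by simp
  | n + 1, hn => by
    have ih := add_mul_le_of_forall_lt_not hdesc n fun j hj => hn j (by omega)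
    have hstep := hdesc n (hn n (by omega))
    push_cast
    linarith

theorem exists_le_div_of_forall_not_imp_add_le {u : ℕ → ℝ} {P : ℕ → Prop} {ε : ℝ}
    (hε : 0 < ε) (hu : ∀ j, 0 ≤ u j) (hdesc : ∀ j, ¬ P j → u (j + 1) + ε ≤ u j) :
    ∃ j : ℕ, (j : ℝ) ≤ u 0 / ε ∧ P j := by
  by_contra! hnone
  set n := ⌊u 0 / ε⌋₊ + 1
  have hbound := add_mul_le_of_forall_lt_not hdesc n fun j hj =>
    hnone j ((Nat.cast_le.mpr (Nat.lt_succ_iff.mp hj)).trans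
      (Nat.floor_le (div_nonneg (hu 0) hε.le)))
  have hn : u 0 < n * ε := by
    have := Nat.lt_floor_add_one (u 0 / ε)
    rw [div_lt_iff₀ hε] at this
    exact_mod_cast this
  linarith [hu n]

section Potential

variable {p : X × X × W → ℝ} {α : Y × X × W → ℝ}

theorem xi_nonneg {d : X × X → ℝ} (hd : ∀ t, 0 ≤ d t) (hp0 : ∀ t, 0 ≤ p t)
    (hα : α ∈ senderSet X W Y) {β : X × Y → ℝ} (hβ : β ∈ receiverSet X Y) :
    0 ≤ xi d p α β :=
  sum_nonneg fun _ _ => sum_nonneg fun _ _ => sum_nonneg fun _ _ => sum_nonneg fun _ _ =>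
    sum_nonneg fun _ _ =>
      mul_nonneg (mul_nonneg (mul_nonneg (hd _) (hβ.1 _).1) (hα.1 _).1) (hp0 _)

theorem Pyw_nonneg (hp0 : ∀ t, 0 ≤ p t) (hα : α ∈ senderSet X W Y) (y : Y) (w : W) :
    0 ≤ Pyw p α y w :=
  sum_nonneg fun _ _ => sum_nonneg fun _ _ => mul_nonneg (hα.1 _).1 (hp0 _)

theorem Pyw_le_Py (hp0 : ∀ t, 0 ≤ p t) (hα : α ∈ senderSet X W Y) (y : Y) (w : W) :
    Pyw p α y w ≤ Py p α y :=
  single_le_sum (fun w _ => Pyw_nonneg hp0 hα y w) (mem_univ w)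

theorem Pyw_le_qW (hp0 : ∀ t, 0 ≤ p t) (hα : α ∈ senderSet X W Y) (y : Y) (w : W) :
    Pyw p α y w ≤ qW p w :=
  sum_le_sum fun _ _ => sum_le_sum fun _ _ => mul_le_of_le_one_left (hp0 _) (hα.1 _).2

theorem sum_qW (hp1 : ∑ x, ∑ z, ∑ w, p (x, z, w) = 1) : ∑ w, qW p w = 1 := by
  rw [← hp1]
  unfold qW
  rw [sum_comm_cycle]
  simp_rw [sum_comm (s := (univ : Finset W))]

theorem sum_Pyw_eq_qW (hα : α ∈ senderSet X W Y) (w : W) : ∑ y, Pyw p α y w = qW p w := by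
  unfold Pyw qW
  simp_rw [sum_comm (s := (univ : Finset Y)), ← sum_mul, hα.2, one_mul]

theorem sum_Py (hp1 : ∑ x, ∑ z, ∑ w, p (x, z, w) = 1) (hα : α ∈ senderSet X W Y) :
    ∑ y, Py p α y = 1 := by
  unfold Py
  rw [sum_comm]
  simp_rw [sum_Pyw_eq_qW hα, sum_qW hp1]

/-- Gibbs' inequality for `P_α(y, w)` against the product of its marginals `P_α(y) q(w)`. -/
theorem zeta_nonneg (hp0 : ∀ t, 0 ≤ p t) (hp1 : ∑ x, ∑ z, ∑ w, p (x, z, w) = 1)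
    (hα : α ∈ senderSet X W Y) : 0 ≤ zeta p α := by
  have hq0 (w : W) : 0 ≤ qW p w := sum_nonneg fun _ _ => sum_nonneg fun _ _ => hp0 _
  have hPy0 (y : Y) : 0 ≤ Py p α y := sum_nonneg fun w _ => Pyw_nonneg hp0 hα y w
  have hac (y : Y) (w : W) (h0 : Py p α y * qW p w = 0) : Pyw p α y w = 0 := by
    refine le_antisymm ?_ (Pyw_nonneg hp0 hα y w)
    rcases mul_eq_zero.mp h0 with h | h
    · exact h ▸ Pyw_le_Py hp0 hα y w
    · exact h ▸ Pyw_le_qW hp0 hα y w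
  calc 0 = ∑ y, ∑ w, (Pyw p α y w - Py p α y * qW p w) := by
        simp only [sum_sub_distrib, ← mul_sum, sum_qW hp1, mul_one, Py, sub_self, sum_const_zero]
    _ ≤ zeta p α := sum_le_sum fun y _ => sum_le_sum fun w _ =>
        sub_le_mul_log_div (Pyw_nonneg hp0 hα y w) (mul_nonneg (hPy0 y) (hq0 w)) (hac y w)

theorem Psi_nonneg {d : X × X → ℝ} (hd : ∀ t, 0 ≤ d t) (hp0 : ∀ t, 0 ≤ p t)
    (hp1 : ∑ x, ∑ z, ∑ w, p (x, z, w) = 1) {ρ : ℝ} (hρ : 0 ≤ ρ)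
    (hα : α ∈ senderSet X W Y) {β : X × Y → ℝ} (hβ : β ∈ receiverSet X Y) :
    0 ≤ Psi d p ρ α β :=
  add_nonneg (xi_nonneg hd hp0 hα hβ) (mul_nonneg hρ (zeta_nonneg hp0 hp1 hα))

end Potential

theorem Psi_eq_Ucost (d : X × X → ℝ) (p : X × X × W → ℝ) (ρ : ℝ) (α : Y × X × W → ℝ)
    (β : X × Y → ℝ) : Psi d p ρ α β = Ucost d p ρ α β := rfl

theorem Psi_eq_Vcost_add (d : X × X → ℝ) (p : X × X × W → ℝ) (ρ : ℝ) (α : Y × X × W → ℝ)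
    (β : X × Y → ℝ) : Psi d p ρ α β = Vcost d p α β + ρ * zeta p α := rfl

namespace IsThreshBRTraj

variable {d : X × X → ℝ} {p : X × X × W → ℝ} {ρ ε : ℝ}
  {αs : ℕ → Y × X × W → ℝ} {βs : ℕ → X × Y → ℝ} {m : ℕ}

theorem receiver_update (h : IsThreshBRTraj d p ρ ε αs βs) (hm : Even m) :
    αs (m + 1) = αs m ∧
      IsThreshUpdate (receiverSet X Y) (Vcost d p (αs m)) ε (βs m) (βs (m + 1)) :=
  h.2.2.1 (m + 1) (by omega) hm.add_one

theorem sender_update (h : IsThreshBRTraj d p ρ ε αs βs) (hm : Odd m) :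
    βs (m + 1) = βs m ∧
      IsThreshUpdate (senderSet X W Y) (Ucost d p ρ · (βs m)) ε (αs m) (αs (m + 1)) :=
  h.2.2.2 (m + 1) (by obtain ⟨j, rfl⟩ := hm; omega) hm.add_one

theorem mem (h : IsThreshBRTraj d p ρ ε αs βs) :
    ∀ k, αs k ∈ senderSet X W Y ∧ βs k ∈ receiverSet X Y
  | 0 => ⟨h.1, h.2.1⟩
  | k + 1 => by
    obtain ⟨hα, hβ⟩ := h.mem k
    rcases Nat.even_or_odd k with hk | hk
    · obtain ⟨hα', hu⟩ := h.receiver_update hk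
      exact ⟨hα' ▸ hα, hu.mem hβ⟩
    · obtain ⟨hβ', hu⟩ := h.sender_update hk
      exact ⟨hu.mem hα, hβ' ▸ hβ⟩

theorem Psi_succ_le (h : IsThreshBRTraj d p ρ ε αs βs) (m : ℕ) :
    Psi d p ρ (αs (m + 1)) (βs (m + 1)) ≤ Psi d p ρ (αs m) (βs m) := by
  rcases Nat.even_or_odd m with hm | hm
  · obtain ⟨hα, hu⟩ := h.receiver_update hm
    rw [hα, Psi_eq_Vcost_add, Psi_eq_Vcost_add]
    linarith [hu.le (h.mem m).2]
  · obtain ⟨hβ, hu⟩ := h.sender_update hm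
    rw [hβ]
    exact hu.le (h.mem m).1

theorem succ_eq_of_isEpsNash (h : IsThreshBRTraj d p ρ ε αs βs)
    (hN : IsEpsNash d p ρ ε (αs m) (βs m)) : αs (m + 1) = αs m ∧ βs (m + 1) = βs m := by
  rcases Nat.even_or_odd m with hm | hm
  · obtain ⟨hα, hu⟩ := h.receiver_update hm
    exact ⟨hα, hu.eq_of_isEpsMinOn hN.2.2.2⟩
  · obtain ⟨hβ, hu⟩ := h.sender_update hm
    exact ⟨hu.eq_of_isEpsMinOn hN.2.2.1, hβ⟩

theorem eq_of_isEpsNash_of_le (h : IsThreshBRTraj d p ρ ε αs βs)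
    (hN : IsEpsNash d p ρ ε (αs m) (βs m)) {k : ℕ} (hk : m ≤ k) :
    αs k = αs m ∧ βs k = βs m := by
  induction k, hk using Nat.le_induction with
  | base => exact ⟨rfl, rfl⟩
  | succ k _ ih =>
    obtain ⟨hα, hβ⟩ := ih
    obtain ⟨hα', hβ'⟩ := h.succ_eq_of_isEpsNash (m := k) (by rwa [hα, hβ])
    exact ⟨hα'.trans hα, hβ'.trans hβ⟩

theorem Psi_succ_add_lt_of_even (h : IsThreshBRTraj d p ρ ε αs βs) (hm : Even m)
    (hopt : ¬ IsEpsMinOn (Vcost d p (αs m)) (receiverSet X Y) ε (βs m)) :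
    Psi d p ρ (αs (m + 1)) (βs (m + 1)) + ε < Psi d p ρ (αs m) (βs m) := by
  obtain ⟨hα, hu⟩ := h.receiver_update hm
  rw [hα, Psi_eq_Vcost_add, Psi_eq_Vcost_add]
  linarith [hu.add_lt_of_not_isEpsMinOn hopt]

theorem Psi_succ_add_lt_of_odd (h : IsThreshBRTraj d p ρ ε αs βs) (hm : Odd m)
    (hopt : ¬ IsEpsMinOn (Ucost d p ρ · (βs m)) (senderSet X W Y) ε (αs m)) :
    Psi d p ρ (αs (m + 1)) (βs (m + 1)) + ε < Psi d p ρ (αs m) (βs m) := by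
  obtain ⟨hβ, hu⟩ := h.sender_update hm
  rw [hβ]
  exact hu.add_lt_of_not_isEpsMinOn hopt

theorem Psi_add_lt_of_not_isEpsNash (h : IsThreshBRTraj d p ρ ε αs βs)
    (hN : ¬ IsEpsNash d p ρ ε (αs m) (βs m)) :
    Psi d p ρ (αs (m + 2)) (βs (m + 2)) + ε < Psi d p ρ (αs m) (βs m) := by
  obtain ⟨hαm, hβm⟩ := h.mem m
  have hmono : Psi d p ρ (αs (m + 2)) (βs (m + 2)) ≤ Psi d p ρ (αs (m + 1)) (βs (m + 1)) :=
    h.Psi_succ_le (m + 1)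
  rcases Nat.even_or_odd m with hm | hm
  · obtain ⟨hα, hR⟩ := h.receiver_update hm
    by_cases hopt : IsEpsMinOn (Vcost d p (αs m)) (receiverSet X Y) ε (βs m)
    · have hβ := hR.eq_of_isEpsMinOn hopt
      have hdrop := h.Psi_succ_add_lt_of_odd hm.add_one
        (by rw [hα, hβ]; exact fun hS => hN ⟨hαm, hβm, hS, hopt⟩)
      rwa [hα, hβ] at hdrop
    · linarith [h.Psi_succ_add_lt_of_even hm hopt]
  · obtain ⟨hβ, hS⟩ := h.sender_update hm
    by_cases hopt : IsEpsMinOn (Ucost d p ρ · (βs m)) (senderSet X W Y) ε (αs m)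
    · have hα := hS.eq_of_isEpsMinOn hopt
      have hdrop := h.Psi_succ_add_lt_of_even hm.add_one
        (by rw [hα, hβ]; exact fun hR => hN ⟨hαm, hβm, hopt, hR⟩)
      rwa [hα, hβ] at hdrop
    · linarith [h.Psi_succ_add_lt_of_odd hm hopt]

end IsThreshBRTraj

theorem thresholded_convergence_time_general
    (p : X × X × W → ℝ) (hp0 : ∀ t, 0 ≤ p t)
    (hp1 : ∑ x, ∑ z, ∑ w, p (x, z, w) = 1)
    (d : X × X → ℝ) (hd : ∀ t, 0 ≤ d t)
    (ρ : ℝ) (hρ : 0 ≤ ρ) (ε : ℝ) (hε : 0 < ε)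
    (αs : ℕ → Y × X × W → ℝ) (βs : ℕ → X × Y → ℝ)
    (htraj : IsThreshBRTraj d p ρ ε αs βs) :
    ∀ k : ℕ, 3 + 2 * Psi d p ρ (αs 0) (βs 0) / ε ≤ (k : ℝ) →
      IsEpsNash d p ρ ε (αs k) (βs k) := by
  intro k hk
  obtain ⟨j, hj, hN⟩ := exists_le_div_of_forall_not_imp_add_le
    (u := fun j => Psi d p ρ (αs (2 * j)) (βs (2 * j)))
    (P := fun j => IsEpsNash d p ρ ε (αs (2 * j)) (βs (2 * j))) hε
    (fun j => Psi_nonneg hd hp0 hp1 hρ (htraj.mem _).1 (htraj.mem _).2)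
    (fun j hj => (htraj.Psi_add_lt_of_not_isEpsNash hj).le)
  have hjk : 2 * j ≤ k := by
    have : (2 * j : ℝ) ≤ k := by
      rw [mul_div_assoc] at hk
      simp only [mul_zero] at hj
      linarith
    exact_mod_cast this
  obtain ⟨hα, hβ⟩ := htraj.eq_of_isEpsNash_of_le hN hjk
  rwa [hα, hβ]

/-- an `ε`-thresholded best-response trajectory is at an `ε`-Nash
equilibrium at every iteration `k ≥ 3 + 2 Ψ(α⁰, β⁰) / ε`. -/
theorem thresholded_convergence_time [Nonempty X] [Nonempty W] [Nonempty Y]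
    (p : X × X × W → ℝ) (hp0 : ∀ t, 0 ≤ p t)
    (hp1 : ∑ x, ∑ z, ∑ w, p (x, z, w) = 1)
    (d : X × X → ℝ) (hd : ∀ t, 0 ≤ d t)
    (ρ : ℝ) (hρ : 0 ≤ ρ) (ε : ℝ) (hε : 0 < ε)
    (αs : ℕ → Y × X × W → ℝ) (βs : ℕ → X × Y → ℝ)
    (htraj : IsThreshBRTraj d p ρ ε αs βs) :
    ∀ k : ℕ, 3 + 2 * Psi d p ρ (αs 0) (βs 0) / ε ≤ (k : ℝ) →
      IsEpsNash d p ρ ε (αs k) (βs k) :=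
  thresholded_convergence_time_general p hp0 hp1 d hd ρ hρ ε hε αs βs htraj
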